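/- arXiv:2601.14940 — 6 statements merged into one kernel-verified Lean document; each statement's English description precedes it below -/
import Mathlib

section
/- Let K be a field and let a, b, x ∈ K satisfy (a − x²)³ = (b − x³)². Then there exists y ∈ K such that x² + y² = a and x³ + y³ = b. (Concretely, y = (b − x³)/(a − x²) when a − x² ≠ 0, and y = 0 otherwise.) -/
theorem stmt_1 {K : Type*} [Field K] (a b x : K)
    (h : (a - x ^ 2) ^ 3 = (b - x ^ 3) ^ 2) :
    ∃ y : K, x ^ 2 + y ^ 2 = a ∧ x ^ 3 + y ^ 3 = b := by
  by_cases ha : a - x ^ 2 = 0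
  · have hb : b - x ^ 3 = 0 := by
      have := h
      rw [ha] at this
      exact pow_eq_zero_iff (by norm_num : 2 ≠ 0) |>.mp (by simpa using this.symm)
    exact ⟨0, by linear_combination -ha, by linear_combination -hb⟩
  · have hb : b - x ^ 3 ≠ 0 := fun hb => ha (by
      rw [hb] at h
      exact pow_eq_zero_iff (by norm_num : 3 ≠ 0) |>.mp (by simpa using h))
    refine ⟨(b - x ^ 3) / (a - x ^ 2), ?_, ?_⟩
    · field_simp
      linear_combination -h
    · field_simp
      linear_combination (-(b - x ^ 3)) * h
end

section
/- Let a, x, y ∈ ℂ satisfy y = x³ + a, x = y³ + a, and x ≠ y. Then σ₁ = x + y satisfies σ₁³ + 2σ₁ − a = 0, and σ₂ = x y satisfies σ₂ = σ₁² + 1. -/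
theorem stmt_8 (a x y : ℂ) (h1 : y = x ^ 3 + a) (h2 : x = y ^ 3 + a) (hxy : x ≠ y) :
    (x + y) ^ 3 + 2 * (x + y) - a = 0 ∧ x * y = (x + y) ^ 2 + 1 := by
  have hsub : (x - y) * (x ^ 2 + x * y + y ^ 2 + 1) = 0 := by
    have := congrArg₂ (· - ·) h2 h1
    linear_combination this
  have hq : x ^ 2 + x * y + y ^ 2 + 1 = 0 :=
    (mul_eq_zero.mp hsub).resolve_left (sub_ne_zero.mpr hxy)
  constructor
  · linear_combination (3 / 2 : ℂ) * (x + y) * hq + (h1 + h2) / 2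
  · linear_combination -hq
end

section
/- For all real numbers a and x, the equation (x³ + a)³ + a = x holds if and only if x³ + a = x. Equivalently, every real root of the ninth-degree equation (x³ + a)³ + a = x is a root of the cubic x³ − x + a = 0, and conversely. -/
theorem stmt_9 (a x : ℝ) :
    (x ^ 3 + a) ^ 3 + a = x ↔ x ^ 3 + a = x := by
  constructor
  · intro h
    set u := x ^ 3 + a with hu
    have key : (u - x) * (u ^ 2 + u * x + x ^ 2 + 1) = 0 := by nlinarith [h]
    have pos : u ^ 2 + u * x + x ^ 2 + 1 > 0 := by nlinarith [sq_nonneg (u + x), sq_nonneg (u - x)]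
    have := mul_eq_zero.mp key
    rcases this with h1 | h2
    · linarith
    · linarith
  · intro h
    rw [h]
    linarith [h]
end

section
/- For all real numbers b and x, the equation (x³ + x + b)³ + x³ + 2b = 0 holds if and only if x³ + b = 0. Equivalently, the only real root of the ninth-degree equation (x³ + x + b)³ + x³ + 2b = 0 is x = −b^{1/3} (the real cube root of −b). -/
theorem stmt_14 (b x : ℝ) :
    (x ^ 3 + x + b) ^ 3 + x ^ 3 + 2 * b = 0 ↔ x ^ 3 + b = 0 := by
  set y := x ^ 3 + x + b with hy
  have hfac : (x ^ 3 + x + b) ^ 3 + x ^ 3 + 2 * b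
      = (x ^ 3 + b) * (x ^ 2 + x * y + y ^ 2 + 2) := by
    rw [hy]; ring
  have hpos : x ^ 2 + x * y + y ^ 2 + 2 > 0 := by nlinarith [sq_nonneg (x + y), sq_nonneg (x - y), sq_nonneg x, sq_nonneg y]
  rw [hfac]
  constructor
  · intro h
    rcases mul_eq_zero.1 h with h | h
    · exact h
    · linarith
  · intro h; rw [h, zero_mul]
end

section
/- Let F be a subfield of ℂ and let a, b ∈ F. Then every complex root x of the sixth-degree equation 2x⁶ − 3a x⁴ − 2b x³ + 3a² x² + b² − a³ = 0 (equivalently, of (a − x²)³ = (b − x³)²) is solvable by radicals over F, i.e. x lies in the subfield solvableByRad F ℂ of elements of ℂ obtainable from F by field operations and extraction of n-th roots. -/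
/-!
If `x² + y² = a` and `x³ + y³ = b`, then `σ₁ = x + y` satisfies `σ₁³ - 3aσ₁ + 2b = 0`, a cubic
solved by Cardano's formula, and `x = (σ₁ + (x - y)) / 2` with `(x - y)² = 2a - σ₁²`. Such a `y`
exists for every root `x` of `(a - x²)³ = (b - x³)²`: a square root `y` of `a - x²` has
`(y³)² = (b - x³)²`, so `y` or `-y` works.
-/

theorem exists_sq_add_sq_and_cube_add_cube {E : Type*} [Field E] [IsAlgClosed E] {a b x : E}
    (hx : (a - x ^ 2) ^ 3 = (b - x ^ 3) ^ 2) :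
    ∃ y, x ^ 2 + y ^ 2 = a ∧ x ^ 3 + y ^ 3 = b := by
  obtain ⟨y, hy⟩ := IsAlgClosed.exists_pow_nat_eq (a - x ^ 2) two_pos
  have hy3 : (y ^ 3) ^ 2 = (b - x ^ 3) ^ 2 := by rw [← hx, ← hy]; ring
  rcases sq_eq_sq_iff_eq_or_eq_neg.mp hy3 with h | h
  · exact ⟨y, by linear_combination hy, by linear_combination h⟩
  · exact ⟨-y, by linear_combination hy, by linear_combination -h⟩

namespace solvableByRad

variable {F E : Type*} [Field F] [Field E] [Algebra F E]

/-- Cardano: the roots of `s³ - 3uv s + (u³ + v³)` are `-(u + v)`, `-(ωu + ω²v)`, `-(ω²u + ωv)`. -/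
theorem mem_of_cardano [NeZero (2 : E)] {u v s : E} (hu : u ∈ solvableByRad F E)
    (hv : v ∈ solvableByRad F E) (hs : s ^ 3 - 3 * u * v * s + (u ^ 3 + v ^ 3) = 0) :
    s ∈ solvableByRad F E := by
  have hfac : (s + u + v) * (s ^ 2 + u ^ 2 + v ^ 2 - s * u - s * v - u * v) = 0 := by
    linear_combination hs
  rcases mul_eq_zero.mp hfac with h | h
  · rw [show s = -u - v by linear_combination h]
    exact sub_mem (neg_mem hu) hv
  · have hsq : (2 * s - u - v) ^ 2 = -3 * (u - v) ^ 2 := by linear_combination 4 * h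
    have hd : 2 * s - u - v ∈ solvableByRad F E :=
      rad_mem two_ne_zero (hsq ▸ mul_mem (neg_mem (ofNat_mem _ 3)) (pow_mem (sub_mem hu hv) 2))
    rw [show s = (2 * s - u - v + u + v) / 2 by field_simp; ring]
    exact div_mem (add_mem (add_mem hd hu) hv) (ofNat_mem _ 2)

variable [IsAlgClosed E] [NeZero (2 : E)]

theorem mem_of_depressed_cubic {a b s : E} (ha : a ∈ solvableByRad F E)
    (hb : b ∈ solvableByRad F E) (hs : s ^ 3 - 3 * a * s + 2 * b = 0) :
    s ∈ solvableByRad F E := by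
  rcases eq_or_ne a 0 with rfl | ha0
  · have hs3 : s ^ 3 = -(2 * b) := by linear_combination hs
    exact rad_mem three_ne_zero (hs3 ▸ neg_mem (mul_mem (ofNat_mem _ 2) hb))
  obtain ⟨d, hd⟩ := IsAlgClosed.exists_pow_nat_eq (b ^ 2 - a ^ 3) two_pos
  obtain ⟨u, hu⟩ := IsAlgClosed.exists_pow_nat_eq (b + d) three_pos
  have hdS : d ∈ solvableByRad F E :=
    rad_mem two_ne_zero (hd ▸ sub_mem (pow_mem hb 2) (pow_mem ha 3))
  have huS : u ∈ solvableByRad F E := rad_mem three_ne_zero (hu ▸ add_mem hb hdS)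
  -- `u = 0` would force `b = -d`, hence `a³ = b² - d² = 0`
  have hu0 : u ≠ 0 := by
    rintro rfl
    exact ha0 (pow_eq_zero_iff three_ne_zero |>.mp
      (by linear_combination (d - b) * hu + hd))
  have huv : u * (a / u) = a := mul_div_cancel₀ a hu0
  have hv : (a / u) ^ 3 = b - d := by
    rw [div_pow, hu, div_eq_iff (hu ▸ pow_ne_zero 3 hu0)]
    linear_combination hd
  exact mem_of_cardano huS (div_mem ha huS)
    (by linear_combination hs - 3 * s * huv + hu + hv)

theorem mem_of_sextic {a b x : E} (ha : a ∈ solvableByRad F E) (hb : b ∈ solvableByRad F E)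
    (hx : (a - x ^ 2) ^ 3 = (b - x ^ 3) ^ 2) : x ∈ solvableByRad F E := by
  obtain ⟨y, hsq, hcube⟩ := exists_sq_add_sq_and_cube_add_cube hx
  have hσ : x + y ∈ solvableByRad F E := mem_of_depressed_cubic ha hb
    (by linear_combination 3 * (x + y) * hsq - 2 * hcube)
  have hδsq : (x - y) ^ 2 = 2 * a - (x + y) ^ 2 := by linear_combination 2 * hsq
  have hδ : x - y ∈ solvableByRad F E :=
    rad_mem two_ne_zero (hδsq ▸ sub_mem (mul_mem (ofNat_mem _ 2) ha) (pow_mem hσ 2))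
  rw [show x = (x + y + (x - y)) / 2 by field_simp; ring]
  exact div_mem (add_mem hσ hδ) (ofNat_mem _ 2)

end solvableByRad

theorem stmt_17 (F : Subfield ℂ) (a b : ℂ) (ha : a ∈ F) (hb : b ∈ F) (x : ℂ)
    (hx : 2 * x ^ 6 - 3 * a * x ^ 4 - 2 * b * x ^ 3 + 3 * a ^ 2 * x ^ 2 + b ^ 2 - a ^ 3 = 0) :
    x ∈ solvableByRad F ℂ :=
  solvableByRad.mem_of_sextic (a := a) (b := b)
    (IntermediateField.algebraMap_mem _ (⟨a, ha⟩ : F))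
    (IntermediateField.algebraMap_mem _ (⟨b, hb⟩ : F))
    (by linear_combination -hx)
end

section
/- Let F be a subfield of ℂ and let a ∈ F. Then every complex root x of the ninth-degree equation (x³ + a)³ + a = x is solvable by radicals over F, i.e. x lies in the subfield solvableByRad F ℂ of elements of ℂ obtainable from F by field operations and extraction of n-th roots. -/
/-!
Put `y = x ^ 3 + a`; the equation says `y ^ 3 + a = x`, so `(x, y)` is a 2-cycle of
`z ↦ z ^ 3 + a`. If `x = y`, then `x` is a root of the cubic `z ^ 3 - z + a`. Otherwise,
subtracting the two equations and cancelling `x - y` gives `x ^ 2 + x y + y ^ 2 = -1`, i.e.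
`σ₂ = σ₁ ^ 2 + 1` for `σ₁ = x + y`, `σ₂ = x y`; adding them then gives `σ₁ ^ 3 + 2 σ₁ = a`.
So `σ₁` is a root of a cubic over `F` and `x` a root of `z ^ 2 - σ₁ z + σ₂`, and cubics and
quadratics are solved by radicals (Cardano, the quadratic formula).
-/

namespace solvableByRad

variable {F E : Type*} [Field F] [Field E] [Algebra F E]

theorem mem_of_quadratic (h2 : (2 : E) ≠ 0) {b c t : E} (hb : b ∈ solvableByRad F E)
    (hc : c ∈ solvableByRad F E) (ht : t ^ 2 + b * t + c = 0) : t ∈ solvableByRad F E := by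
  have hdisc : (2 * t + b) ^ 2 = b ^ 2 - 4 * c := by linear_combination 4 * ht
  have hroot : 2 * t + b ∈ solvableByRad F E :=
    rad_mem two_ne_zero (hdisc ▸ sub_mem (pow_mem hb 2) (mul_mem (ofNat_mem _ 4) hc))
  rw [show t = (2 * t + b - b) / 2 by field_simp; ring]
  exact div_mem (sub_mem hroot hb) (ofNat_mem _ 2)

-- Cardano: writing `t = u - p / (3 u)`, the cube `u ^ 3` is a root of the resolvent
-- `w ^ 2 + q w - p ^ 3 / 27`.
theorem mem_of_depressed_cubic_s18 [CharZero E] [IsAlgClosed E] {p q t : E}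
    (hp : p ∈ solvableByRad F E) (hq : q ∈ solvableByRad F E) (ht : t ^ 3 + p * t + q = 0) :
    t ∈ solvableByRad F E := by
  obtain ⟨u, hu⟩ : ∃ u : E, u ^ 2 - t * u - p / 3 = 0 := by
    obtain ⟨w, hw⟩ := IsAlgClosed.exists_pow_nat_eq (t ^ 2 + 4 * p / 3) two_pos
    exact ⟨(t + w) / 2, by linear_combination hw / 4⟩
  have hresolvent : (u ^ 3) ^ 2 + q * u ^ 3 + -(p ^ 3 / 27) = 0 := by
    linear_combination (u ^ 4 + u ^ 3 * t + u ^ 2 * p / 3 + u ^ 2 * t ^ 2 + u * q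
        + 2 / 3 * u * t * p + u * t ^ 3 + p ^ 2 / 9 + t ^ 2 * p + t * q + t ^ 4) * hu
      + (u * t ^ 2 + t * p / 3 + u * p / 3) * ht
  have hu_mem : u ∈ solvableByRad F E :=
    rad_mem three_ne_zero <| mem_of_quadratic two_ne_zero hq
      (neg_mem (div_mem (pow_mem hp 3) (ofNat_mem _ 27))) hresolvent
  rcases eq_or_ne u 0 with rfl | hu0
  · have hp0 : p = 0 := by linear_combination -3 * hu
    subst hp0
    exact rad_mem three_ne_zero ((show t ^ 3 = -q by linear_combination ht) ▸ neg_mem hq)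
  · rw [show t = u - p / (3 * u) by field_simp; linear_combination -3 * hu]
    exact sub_mem hu_mem (div_mem hp (mul_mem (ofNat_mem _ 3) hu_mem))

end solvableByRad

section CubeAddCycle

variable {R : Type*} [CommRing R] [IsDomain R] {a x y : R}

theorem mul_eq_add_sq_add_one_of_cube_add_cycle (hy : x ^ 3 + a = y) (hx : y ^ 3 + a = x)
    (hne : x ≠ y) : x * y = (x + y) ^ 2 + 1 := by
  have : (x - y) * (x ^ 2 + x * y + y ^ 2 + 1) = 0 := by linear_combination hy - hx
  linear_combination -(mul_eq_zero.mp this).resolve_left (sub_ne_zero.mpr hne)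

theorem add_cube_add_two_mul_eq_of_cube_add_cycle (h2 : (2 : R) ≠ 0) (hy : x ^ 3 + a = y)
    (hx : y ^ 3 + a = x) (hne : x ≠ y) : (x + y) ^ 3 + 2 * (x + y) - a = 0 := by
  have hxy := mul_eq_add_sq_add_one_of_cube_add_cycle hy hx hne
  have : 2 * ((x + y) ^ 3 + 2 * (x + y) - a) = 0 := by
    linear_combination -hy - hx - 3 * (x + y) * hxy
  exact (mul_eq_zero.mp this).resolve_left h2

end CubeAddCycle

theorem stmt_18 (F : Subfield ℂ) (a : ℂ) (ha : a ∈ F) (x : ℂ)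
    (hx : (x ^ 3 + a) ^ 3 + a = x) :
    x ∈ solvableByRad F ℂ := by
  have ha' : a ∈ solvableByRad F ℂ := (solvableByRad F ℂ).algebraMap_mem (⟨a, ha⟩ : F)
  generalize hy : x ^ 3 + a = y at hx
  rcases eq_or_ne x y with rfl | hne
  · exact solvableByRad.mem_of_depressed_cubic_s18 (neg_mem (one_mem _)) ha'
      (by linear_combination hy)
  · have hsum : x + y ∈ solvableByRad F ℂ :=
      solvableByRad.mem_of_depressed_cubic_s18 (ofNat_mem _ 2) (neg_mem ha')
        (by linear_combination add_cube_add_two_mul_eq_of_cube_add_cycle two_ne_zero hy hx hne)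
    refine solvableByRad.mem_of_quadratic two_ne_zero (neg_mem hsum)
      (add_mem (pow_mem hsum 2) (one_mem _)) ?_
    linear_combination -mul_eq_add_sq_add_one_of_cube_add_cycle hy hx hne
end
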